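/- arXiv:1608.00110 — 5 statements merged into one kernel-verified Lean document; each statement's English description precedes it below -/
import Mathlib

section
/- Let X be a connected finite preordered set with |X| ≥ 2, R a 2-torsion free commutative ring with identity, and L a Lie derivation of I(X,R) with L(e_{ij}) = Σ_{x≤y} C^{ij}_{xy} e_{xy}. Then for every i ∈ X, L(e_{ii}) = Σ_{x<i} C^{ii}_{xi} e_{xi} + Σ_{x∈X} C^{ii}_{xx} e_{xx} + Σ_{y>i} C^{ii}_{iy} e_{iy}; equivalently, C^{ii}_{xy} = 0 whenever x < y with x ≠ i and y ≠ i. -/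
open Finset

/-- The standard basis element `e_{xy}` of the incidence algebra:
`e_{xy}(u,v) = 1` if `(u,v) = (x,y)` (and `x ≤ y`), and `0` otherwise. -/
def e (R : Type*) [CommRing R] {X : Type*} [Preorder X] [DecidableEq X]
    [DecidableRel (α := X) (· ≤ ·)] (x y : X) : IncidenceAlgebra R X :=
  ⟨fun u v => if u = x ∧ v = y ∧ x ≤ y then 1 else 0, fun u v huv => by
    simp only [ite_eq_right_iff, and_imp]
    rintro rfl rfl h
    exact absurd h huv⟩

lemma e_apply (R : Type*) [CommRing R] {X : Type*} [Preorder X] [DecidableEq X]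
    [DecidableRel (α := X) (· ≤ ·)] (x y u v : X) :
    e R x y u v = if u = x ∧ v = y ∧ x ≤ y then 1 else 0 := rfl

/-- Let `X` be a connected finite preordered set with `|X| ≥ 2`, `R` a 2-torsion free
commutative ring with identity, and `L` a Lie derivation of `I(X,R)` with coefficients
`C^{ij}_{xy} = L(e_{ij})(x,y)`. Then `C^{ii}_{xy} = 0` whenever `x < y` with `x ≠ i` and
`y ≠ i` (equivalently, `L(e_{ii}) = Σ_{x<i} C^{ii}_{xi} e_{xi} + Σ_{x∈X} C^{ii}_{xx} e_{xx}
+ Σ_{y>i} C^{ii}_{iy} e_{iy}`). -/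
theorem lieDer_apply_e_diag_coeff_zero {R X : Type*} [CommRing R] [Preorder X]
    [Fintype X] [DecidableEq X] [DecidableRel (α := X) (· ≤ ·)] [LocallyFiniteOrder X]
    (htf : ∀ r : R, r + r = 0 → r = 0)
    (hconn : ∀ x y : X, Relation.ReflTransGen (fun a b : X => a ≤ b ∨ b ≤ a) x y)
    (hcard : 2 ≤ Fintype.card X)
    (L : IncidenceAlgebra R X →ₗ[R] IncidenceAlgebra R X)
    (hL : ∀ f g : IncidenceAlgebra R X,
      L (f * g - g * f) = (L f * g - g * L f) + (f * L g - L g * f))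
    (i x y : X) (hxy : x ≤ y) (hne : x ≠ y) (hxi : x ≠ i) (hyi : y ≠ i) :
    L (e R i i) x y = 0 := by
  have hcomm : e R i i * e R y y - e R y y * e R i i = 0 := by
    ext u v _
    simp only [IncidenceAlgebra.sub_apply, IncidenceAlgebra.mul_apply,
      IncidenceAlgebra.zero_apply, e_apply]
    rw [Finset.sum_eq_zero, Finset.sum_eq_zero, sub_zero]
    · intro z _
      by_cases h : z = i <;> by_cases h' : z = y <;> simp_all
    · intro z _
      by_cases h : z = i <;> by_cases h' : z = y <;> simp_all
  have key := hL (e R i i) (e R y y)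
  rw [hcomm, map_zero] at key
  have key2 := congrArg (fun f : IncidenceAlgebra R X => f x y) key.symm
  simp only [IncidenceAlgebra.add_apply, IncidenceAlgebra.sub_apply,
    IncidenceAlgebra.mul_apply, IncidenceAlgebra.zero_apply, e_apply] at key2
  have h1 : ∑ z ∈ Icc x y, L (e R i i) x z * (if z = y ∧ True ∧ y ≤ y then (1:R) else 0)
      = L (e R i i) x y := by
    rw [Finset.sum_eq_single y]
    · simp
    · intro z _ hz; simp [hz]
    · intro h; exact absurd (Finset.mem_Icc.2 ⟨hxy, le_refl y⟩) h
  have h2 : ∑ z ∈ Icc x y, (if x = y ∧ z = y ∧ y ≤ y then (1:R) else 0) * L (e R i i) z y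
      = 0 := Finset.sum_eq_zero fun z _ => by simp [hne]
  have h3 : ∑ z ∈ Icc x y, (if x = i ∧ z = i ∧ i ≤ i then (1:R) else 0) * L (e R y y) z y
      = 0 := Finset.sum_eq_zero fun z _ => by simp [hxi]
  have h4 : ∑ z ∈ Icc x y, L (e R y y) x z * (if z = i ∧ y = i ∧ i ≤ i then (1:R) else 0)
      = 0 := Finset.sum_eq_zero fun z _ => by simp [hyi]
  rw [h1, h2, h3, h4] at key2
  linear_combination key2
end

section
/- Let X be a connected finite preordered set, R a 2-torsion free commutative ring with identity, and L a Lie derivation of I(X,R) with coefficients L(e_{ij}) = Σ_{x≤y} C^{ij}_{xy} e_{xy}. Then for all i < j, L(e_{ij}) = Σ_{x<i} C^{ii}_{xi} e_{xj} + C^{ij}_{ij} e_{ij} + Σ_{y>j} C^{jj}_{jy} e_{iy}. -/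
/-! For `i < j` we have `e_{ij} = [e_{ii}, e_{ij}] = [e_{ij}, e_{jj}]`. Applying `L` to the first
identity and evaluating at `(x, y)` with `x ≠ i` gives `L(e_{ij})(x, y) = [y = j] L(e_{ii})(x, i)
- [y = i] L(e_{ij})(x, i)`; the second identity gives the mirror formula for `y ≠ j`. These fix
every entry of `L(e_{ij})` except `(i, j)`; for the entry `(x, i)` the first formula reads
`c = -c`, so `c = 0` since `R` is 2-torsion free. -/

open Finset

def IsLieDerivation {A : Type*} [Ring A] (L : A → A) : Prop :=
  ∀ f g, L (f * g - g * f) = (L f * g - g * L f) + (f * L g - L g * f)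

namespace IncidenceAlgebra

lemma sum_apply {𝕜 α ι : Type*} [AddCommMonoid 𝕜] [LE α] (s : Finset ι)
    (f : ι → IncidenceAlgebra 𝕜 α) (a b : α) :
    (∑ k ∈ s, f k) a b = ∑ k ∈ s, f k a b :=
  map_sum ({ toFun := fun f => f a b, map_zero' := rfl, map_add' := fun _ _ => rfl } :
    IncidenceAlgebra 𝕜 α →+ 𝕜) f s

variable {R X : Type*} [CommRing R] [Preorder X] [DecidableEq X]
  [DecidableRel (α := X) (· ≤ ·)]

lemma e_apply (x y u v : X) : e R x y u v = if u = x ∧ v = y ∧ x ≤ y then 1 else 0 := rfl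

lemma sum_smul_e_right_apply (s : Finset X) (c : X → R) {b : X} (hs : ∀ z ∈ s, z ≤ b)
    (u v : X) : (∑ z ∈ s, c z • e R z b) u v = if u ∈ s ∧ v = b then c u else 0 := by
  simp only [sum_apply, constSMul_apply, e_apply, smul_eq_mul, mul_ite, mul_one, mul_zero]
  by_cases hu : u ∈ s
  · rw [sum_eq_single_of_mem u hu fun z _ hzu => if_neg fun h => hzu h.1.symm]
    simp [hu, hs u hu]
  · rw [sum_eq_zero fun z hz => if_neg fun ⟨huz, _⟩ => hu (huz ▸ hz)]
    simp [hu]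

lemma sum_smul_e_left_apply (s : Finset X) (c : X → R) {a : X} (hs : ∀ z ∈ s, a ≤ z)
    (u v : X) : (∑ z ∈ s, c z • e R a z) u v = if u = a ∧ v ∈ s then c v else 0 := by
  simp only [sum_apply, constSMul_apply, e_apply, smul_eq_mul, mul_ite, mul_one, mul_zero]
  by_cases hv : v ∈ s
  · rw [sum_eq_single_of_mem v hv fun z _ hzv => if_neg fun h => hzv h.2.1.symm]
    simp [hv, hs v hv]
  · rw [sum_eq_zero fun z hz => if_neg fun ⟨_, hvz, _⟩ => hv (hvz ▸ hz)]
    simp [hv]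

variable [LocallyFiniteOrder X]

lemma mul_e_apply (f : IncidenceAlgebra R X) {a b : X} (hab : a ≤ b) (u v : X) :
    (f * e R a b) u v = if v = b then f u a else 0 := by
  rw [mul_apply]
  split_ifs with hv
  · subst hv
    simp only [e_apply, hab, and_true, mul_ite, mul_one, mul_zero, sum_ite_eq', mem_Icc]
    by_cases hua : u ≤ a
    · simp [hua]
    · simp [hua, apply_eq_zero_of_not_le hua]
  · simp [e_apply, hv]

lemma e_mul_apply (f : IncidenceAlgebra R X) {a b : X} (hab : a ≤ b) (u v : X) :
    (e R a b * f) u v = if u = a then f b v else 0 := by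
  rw [mul_apply]
  split_ifs with hu
  · subst hu
    simp only [e_apply, hab, and_true, true_and, ite_mul, one_mul, zero_mul, sum_ite_eq',
      mem_Icc]
    by_cases hbv : b ≤ v
    · simp [hbv]
    · simp [hbv, apply_eq_zero_of_not_le hbv]
  · simp [e_apply, hu]

lemma e_self_mul_e_sub_e_mul_e_self {i j : X} (hij : i ≤ j) (hne : i ≠ j) :
    e R i i * e R i j - e R i j * e R i i = e R i j := by
  ext u v
  rw [sub_apply, e_mul_apply _ le_rfl, mul_e_apply _ le_rfl]
  by_cases hu : u = i <;> by_cases hv : v = i <;> simp [e_apply, hij, hne, hu, hv]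

lemma e_mul_e_self_sub_e_self_mul_e {i j : X} (hij : i ≤ j) (hne : i ≠ j) :
    e R i j * e R j j - e R j j * e R i j = e R i j := by
  ext u v
  rw [sub_apply, mul_e_apply _ le_rfl, e_mul_apply _ le_rfl]
  by_cases hu : u = j <;> by_cases hv : v = j <;> simp [e_apply, hij, hne.symm, hu, hv]

end IncidenceAlgebra

namespace IsLieDerivation

open IncidenceAlgebra

variable {R X : Type*} [CommRing R] [Preorder X] [LocallyFiniteOrder X] [DecidableEq X]
  [DecidableRel (α := X) (· ≤ ·)] {L : IncidenceAlgebra R X → IncidenceAlgebra R X} {i j : X}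

lemma apply_e_apply_of_ne_row (hL : IsLieDerivation L) (hij : i ≤ j) (hne : i ≠ j) {x : X}
    (hx : x ≠ i) (y : X) :
    L (e R i j) x y =
      (if y = j then L (e R i i) x i else 0) - (if y = i then L (e R i j) x i else 0) := by
  conv_lhs => rw [← e_self_mul_e_sub_e_mul_e_self hij hne, hL]
  simp only [IncidenceAlgebra.add_apply, IncidenceAlgebra.sub_apply, mul_e_apply _ hij,
    e_mul_apply _ hij, mul_e_apply _ le_rfl, e_mul_apply _ le_rfl, if_neg hx]
  ring

lemma apply_e_apply_of_ne_col (hL : IsLieDerivation L) (hij : i ≤ j) (hne : i ≠ j) (x : X)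
    {y : X} (hy : y ≠ j) :
    L (e R i j) x y =
      (if x = i then L (e R j j) j y else 0) - (if x = j then L (e R i j) j y else 0) := by
  conv_lhs => rw [← e_mul_e_self_sub_e_self_mul_e hij hne, hL]
  simp only [IncidenceAlgebra.add_apply, IncidenceAlgebra.sub_apply, mul_e_apply _ hij,
    e_mul_apply _ hij, mul_e_apply _ le_rfl, e_mul_apply _ le_rfl, if_neg hy]
  ring

lemma apply_e_col (hL : IsLieDerivation L) (hij : i ≤ j) (hne : i ≠ j) {x : X} (hx : x ≠ i) :
    L (e R i j) x j = L (e R i i) x i := by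
  simp [hL.apply_e_apply_of_ne_row hij hne hx, hne.symm]

lemma apply_e_row (hL : IsLieDerivation L) (hij : i ≤ j) (hne : i ≠ j) {y : X} (hy : y ≠ j) :
    L (e R i j) i y = L (e R j j) j y := by
  simp [hL.apply_e_apply_of_ne_col hij hne i hy, hne]

lemma apply_e_apply_eq_zero (hL : IsLieDerivation L) (htf : ∀ r : R, r + r = 0 → r = 0)
    (hij : i ≤ j) (hne : i ≠ j) {x y : X} (hx : x ≠ i) (hy : y ≠ j) :
    L (e R i j) x y = 0 := by
  have h := hL.apply_e_apply_of_ne_row hij hne hx y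
  rw [if_neg hy, zero_sub] at h
  split_ifs at h with hyi
  · subst hyi
    exact htf _ (by linear_combination h)
  · simpa using h

end IsLieDerivation

theorem lieDer_apply_e_off_diag_general {R X : Type*} [CommRing R] [Preorder X]
    [Fintype X] [DecidableEq X] [DecidableRel (α := X) (· ≤ ·)] [LocallyFiniteOrder X]
    (htf : ∀ r : R, r + r = 0 → r = 0)
    (L : IncidenceAlgebra R X →ₗ[R] IncidenceAlgebra R X)
    (hL : ∀ f g : IncidenceAlgebra R X,
      L (f * g - g * f) = (L f * g - g * L f) + (f * L g - L g * f))
    (i j : X) (hij : i ≤ j) (hne : i ≠ j) :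
    L (e R i j) =
      (∑ x ∈ Finset.univ.filter (fun x : X => x ≤ i ∧ x ≠ i), L (e R i i) x i • e R x j)
        + L (e R i j) i j • e R i j
        + ∑ y ∈ Finset.univ.filter (fun y : X => j ≤ y ∧ y ≠ j), L (e R j j) j y • e R i y := by
  have hLie : IsLieDerivation L := hL
  ext x y
  rw [IncidenceAlgebra.add_apply, IncidenceAlgebra.add_apply, IncidenceAlgebra.constSMul_apply,
    IncidenceAlgebra.e_apply,
    IncidenceAlgebra.sum_smul_e_right_apply _ _ fun z hz => (mem_filter.1 hz).2.1.trans hij,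
    IncidenceAlgebra.sum_smul_e_left_apply _ _ fun z hz => hij.trans (mem_filter.1 hz).2.1]
  simp only [mem_filter, mem_univ, true_and, smul_eq_mul]
  rcases eq_or_ne x i with rfl | hx <;> rcases eq_or_ne y j with rfl | hy
  · simp [hij]
  · rw [hLie.apply_e_row hij hne hy]
    by_cases hjy : j ≤ y
    · simp [hjy, hy]
    · simp [hjy, hy, IncidenceAlgebra.apply_eq_zero_of_not_le hjy]
  · rw [hLie.apply_e_col hij hne hx]
    by_cases hxi : x ≤ i
    · simp [hxi, hx]
    · simp [hxi, hx, IncidenceAlgebra.apply_eq_zero_of_not_le hxi]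
  · simp [hLie.apply_e_apply_eq_zero htf hij hne hx hy, hx, hy]

/-- Let `X` be a connected finite preordered set, `R` a 2-torsion free commutative ring,
and `L` a Lie derivation of `I(X,R)` with coefficients `C^{ij}_{xy} = L(e_{ij})(x,y)`.
Then for all `i < j`,
`L(e_{ij}) = Σ_{x<i} C^{ii}_{xi} e_{xj} + C^{ij}_{ij} e_{ij} + Σ_{y>j} C^{jj}_{jy} e_{iy}`. -/
theorem lieDer_apply_e_off_diag {R X : Type*} [CommRing R] [Preorder X]
    [Fintype X] [DecidableEq X] [DecidableRel (α := X) (· ≤ ·)] [LocallyFiniteOrder X]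
    (htf : ∀ r : R, r + r = 0 → r = 0)
    (hconn : ∀ x y : X, Relation.ReflTransGen (fun a b : X => a ≤ b ∨ b ≤ a) x y)
    (L : IncidenceAlgebra R X →ₗ[R] IncidenceAlgebra R X)
    (hL : ∀ f g : IncidenceAlgebra R X,
      L (f * g - g * f) = (L f * g - g * L f) + (f * L g - L g * f))
    (i j : X) (hij : i ≤ j) (hne : i ≠ j) :
    L (e R i j) =
      (∑ x ∈ Finset.univ.filter (fun x : X => x ≤ i ∧ x ≠ i), L (e R i i) x i • e R x j)
        + L (e R i j) i j • e R i j
        + ∑ y ∈ Finset.univ.filter (fun y : X => j ≤ y ∧ y ≠ j), L (e R j j) j y • e R i y :=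
  lieDer_apply_e_off_diag_general htf L hL i j hij hne
end

section
/- Let X be a connected finite preordered set, R 2-torsion free, and L a Lie derivation of I(X,R). Writing L(e_{ij}) = Σ C^{ij}_{xy} e_{xy}, one has C^{ii}_{ij} + C^{jj}_{ij} = 0 for all i < j. -/
open Finset

/-- For a Lie derivation `L` of the incidence algebra of a connected finite preordered set
over a 2-torsion free commutative ring, with coefficients `C^{ij}_{xy} = L(e_{ij})(x,y)`,
one has `C^{ii}_{ij} + C^{jj}_{ij} = 0` for all `i < j`. -/
theorem lieDer_coeff_sum_zero {R X : Type*} [CommRing R] [Preorder X]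
    [Fintype X] [DecidableEq X] [DecidableRel (α := X) (· ≤ ·)] [LocallyFiniteOrder X]
    (htf : ∀ r : R, r + r = 0 → r = 0)
    (hconn : ∀ x y : X, Relation.ReflTransGen (fun a b : X => a ≤ b ∨ b ≤ a) x y)
    (L : IncidenceAlgebra R X →ₗ[R] IncidenceAlgebra R X)
    (hL : ∀ f g : IncidenceAlgebra R X,
      L (f * g - g * f) = (L f * g - g * L f) + (f * L g - L g * f))
    (i j : X) (hij : i ≤ j) (hne : i ≠ j) :
    L (e R i i) i j + L (e R j j) i j = 0 := by
  have h0 : e R i i * (e R j j) - e R j j * e R i i = (0 : IncidenceAlgebra R X) := by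
    ext a b
    rw [IncidenceAlgebra.sub_apply, IncidenceAlgebra.mul_apply, IncidenceAlgebra.mul_apply,
      IncidenceAlgebra.zero_apply]
    have hA : ∀ x ∈ Icc a b, e R i i a x * e R j j x b = 0 := by
      intro x _
      by_cases h2 : x = j ∧ b = j ∧ j ≤ j
      · rw [e_apply _ i i, if_neg, zero_mul]
        rintro ⟨-, hxi, -⟩; exact hne (hxi ▸ h2.1)
      · rw [e_apply _ j j, if_neg h2, mul_zero]
    have hB : ∀ x ∈ Icc a b, e R j j a x * e R i i x b = 0 := by
      intro x _
      by_cases h2 : x = i ∧ b = i ∧ i ≤ i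
      · rw [e_apply _ j j, if_neg, zero_mul]
        rintro ⟨-, hxj, -⟩; exact hne (h2.1.symm.trans hxj)
      · rw [e_apply _ i i x b, if_neg h2, mul_zero]
    rw [Finset.sum_eq_zero hA, Finset.sum_eq_zero hB, sub_zero]
  have key := hL (e R i i) (e R j j)
  rw [h0, L.map_zero] at key
  have key2 := congrArg (fun f : IncidenceAlgebra R X => f i j) key
  simp only [IncidenceAlgebra.add_apply, IncidenceAlgebra.sub_apply,
    IncidenceAlgebra.mul_apply, IncidenceAlgebra.zero_apply] at key2
  have hjmem : j ∈ Icc i j := Finset.mem_Icc.mpr ⟨hij, le_refl j⟩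
  have himem : i ∈ Icc i j := Finset.mem_Icc.mpr ⟨le_refl i, hij⟩
  have S1 : ∑ x ∈ Icc i j, L (e R i i) i x * e R j j x j = L (e R i i) i j := by
    rw [Finset.sum_eq_single j]
    · rw [e_apply, if_pos ⟨rfl, rfl, le_refl j⟩, mul_one]
    · intro x _ hxj; rw [e_apply, if_neg, mul_zero]; rintro ⟨h, -⟩; exact hxj h
    · exact fun h => absurd hjmem h
  have S2 : ∑ x ∈ Icc i j, e R j j i x * L (e R i i) x j = 0 := by
    refine Finset.sum_eq_zero fun x _ => ?_
    rw [e_apply, if_neg, zero_mul]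
    rintro ⟨h, -⟩; exact hne h
  have S3 : ∑ x ∈ Icc i j, e R i i i x * L (e R j j) x j = L (e R j j) i j := by
    rw [Finset.sum_eq_single i]
    · rw [e_apply, if_pos ⟨rfl, rfl, le_refl i⟩, one_mul]
    · intro x _ hxi; rw [e_apply, if_neg, zero_mul]; rintro ⟨-, h, -⟩; exact hxi h
    · exact fun h => absurd himem h
  have S4 : ∑ x ∈ Icc i j, L (e R j j) i x * e R i i x j = 0 := by
    refine Finset.sum_eq_zero fun x _ => ?_
    rw [e_apply, if_neg, mul_zero]
    rintro ⟨-, h, -⟩; exact hne h.symm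
  rw [S1, S2, S3, S4, sub_zero, sub_zero] at key2
  exact key2.symm
end

section
/- Let X be a connected finite preordered set, R 2-torsion free, and L a Lie derivation of I(X,R). Writing L(e_{ij}) = Σ C^{ij}_{xy} e_{xy}, one has C^{ii}_{ii} = C^{ii}_{xx} for all i, x ∈ X. -/
open Finset

set_option linter.unusedSectionVars false

section Helpers

variable {R X : Type*} [CommRing R] [Preorder X] [DecidableEq X]
    [DecidableRel (α := X) (· ≤ ·)] [LocallyFiniteOrder X]

lemma e'_apply (x y u v : X) : (e R x y : IncidenceAlgebra R X) u v
    = if u = x ∧ v = y ∧ x ≤ y then 1 else 0 := rfl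

lemma e'_mul_apply (x y : X) (f : IncidenceAlgebra R X) (u v : X) :
    ((e R x y : IncidenceAlgebra R X) * f) u v = if u = x ∧ x ≤ y then f y v else 0 := by
  rw [IncidenceAlgebra.mul_apply]
  by_cases h : u = x ∧ x ≤ y
  · obtain ⟨rfl, hxy⟩ := h
    rw [if_pos ⟨rfl, hxy⟩]
    by_cases hy : y ∈ Icc u v
    · rw [Finset.sum_eq_single y (fun k hk hne => by
        rw [e'_apply, if_neg (by tauto), zero_mul]) (fun h => absurd hy h)]
      rw [e'_apply, if_pos ⟨rfl, rfl, hxy⟩, one_mul]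
    · rw [IncidenceAlgebra.apply_eq_zero_of_not_le
        (fun hyv => hy (mem_Icc.2 ⟨hxy, hyv⟩)) f]
      exact Finset.sum_eq_zero fun k hk => by
        rw [e'_apply, if_neg (by rintro ⟨-, rfl, -⟩; exact hy hk), zero_mul]
  · rw [if_neg h]
    exact Finset.sum_eq_zero fun k hk => by
      rw [e'_apply, if_neg (by tauto), zero_mul]

lemma mul_e'_apply (x y : X) (f : IncidenceAlgebra R X) (u v : X) :
    (f * (e R x y : IncidenceAlgebra R X)) u v = if v = y ∧ x ≤ y then f u x else 0 := by
  rw [IncidenceAlgebra.mul_apply]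
  by_cases h : v = y ∧ x ≤ y
  · obtain ⟨rfl, hxy⟩ := h
    rw [if_pos ⟨rfl, hxy⟩]
    by_cases hx : x ∈ Icc u v
    · rw [Finset.sum_eq_single x (fun k hk hne => by
        rw [e'_apply, if_neg (by tauto), mul_zero]) (fun h => absurd hx h)]
      rw [e'_apply, if_pos ⟨rfl, rfl, hxy⟩, mul_one]
    · rw [IncidenceAlgebra.apply_eq_zero_of_not_le
        (fun hux => hx (mem_Icc.2 ⟨hux, hxy⟩)) f]
      exact Finset.sum_eq_zero fun k hk => by
        rw [e'_apply, if_neg (by rintro ⟨rfl, -⟩; exact hx hk), mul_zero]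
  · rw [if_neg h]
    exact Finset.sum_eq_zero fun k hk => by
      rw [e'_apply, if_neg (by tauto), mul_zero]

lemma e'_mul_e' (i a b : X) (hab : a ≤ b) :
    (e R i i : IncidenceAlgebra R X) * e R a b = if i = a then e R a b else 0 := by
  ext u v _
  rw [e'_mul_apply]
  by_cases hia : i = a <;> by_cases hui : u = i <;>
    simp [e'_apply, hia, hui, IncidenceAlgebra.zero_apply, hab] <;> split_ifs <;> tauto

lemma e'_mul_e'' (i a b : X) (hab : a ≤ b) :
    (e R a b : IncidenceAlgebra R X) * e R i i = if b = i then e R a b else 0 := by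
  ext u v _
  rw [mul_e'_apply]
  by_cases hbi : b = i <;> by_cases hvi : v = i <;>
    simp [e'_apply, hbi, hvi, IncidenceAlgebra.zero_apply, hab] <;> first
      | (split_ifs <;> tauto)
      | tauto
      | (rintro rfl h; exact absurd h.symm hbi)

lemma key_step (L : IncidenceAlgebra R X →ₗ[R] IncidenceAlgebra R X)
    (hL : ∀ f g : IncidenceAlgebra R X,
      L (f * g - g * f) = (L f * g - g * L f) + (f * L g - L g * f))
    (i a b : X) (hab : a ≤ b) :
    L (e R i i) a a = L (e R i i) b b := by
  have key := hL (e R i i) (e R a b)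
  have hii : (i : X) ≤ i := le_refl i
  -- evaluate both sides at (a, b)
  have h1 : ((L (e R i i) * e R a b : IncidenceAlgebra R X) a b) = L (e R i i) a a :=
    (mul_e'_apply a b _ a b).trans (if_pos ⟨rfl, hab⟩)
  have h2 : ((e R a b * L (e R i i) : IncidenceAlgebra R X) a b) = L (e R i i) b b :=
    (e'_mul_apply a b _ a b).trans (if_pos ⟨rfl, hab⟩)
  have h3 : ((e R i i : IncidenceAlgebra R X) * L (e R a b)) a b
      = if a = i then L (e R a b) i b else 0 := by
    rw [e'_mul_apply]; by_cases h : a = i <;> simp [h]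
  have h4 : (L (e R a b) * (e R i i : IncidenceAlgebra R X)) a b
      = if b = i then L (e R a b) a i else 0 := by
    rw [mul_e'_apply]; by_cases h : b = i <;> simp [h]
  rw [e'_mul_e' i a b hab, e'_mul_e'' i a b hab] at key
  have keyab := congrFun (DFunLike.congr_fun key a) b
  simp only [IncidenceAlgebra.sub_apply, IncidenceAlgebra.add_apply] at keyab
  rw [h1, h2, h3, h4] at keyab
  by_cases hia : i = a <;> by_cases hbi : b = i
  · subst hia; subst hbi; rfl
  · subst hia
    simp only [if_pos rfl, ite_true, if_neg hbi, sub_zero] at keyab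
    linear_combination -keyab
  · subst hbi
    rw [if_neg hia, if_pos rfl, if_neg (fun h => hia h.symm), if_pos rfl, zero_sub, map_neg] at keyab
    rw [IncidenceAlgebra.neg_apply] at keyab
    linear_combination -keyab
  · rw [if_neg hia, if_neg hbi, if_neg (fun h => hia h.symm), if_neg hbi, sub_zero, map_zero] at keyab
    rw [IncidenceAlgebra.zero_apply] at keyab
    linear_combination -keyab

end Helpers

/-- For a Lie derivation `L` of the incidence algebra of a connected finite preordered set
over a 2-torsion free commutative ring, with coefficients `C^{ij}_{xy} = L(e_{ij})(x,y)`,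
one has `C^{ii}_{ii} = C^{ii}_{xx}` for all `i, x ∈ X`. -/
theorem lieDer_coeff_diag_const {R X : Type*} [CommRing R] [Preorder X]
    [Fintype X] [DecidableEq X] [DecidableRel (α := X) (· ≤ ·)] [LocallyFiniteOrder X]
    (htf : ∀ r : R, r + r = 0 → r = 0)
    (hconn : ∀ x y : X, Relation.ReflTransGen (fun a b : X => a ≤ b ∨ b ≤ a) x y)
    (L : IncidenceAlgebra R X →ₗ[R] IncidenceAlgebra R X)
    (hL : ∀ f g : IncidenceAlgebra R X,
      L (f * g - g * f) = (L f * g - g * L f) + (f * L g - L g * f))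
    (i x : X) :
    L (e R i i) i i = L (e R i i) x x := by
  induction hconn i x with
  | refl => rfl
  | tail _ hbc ih =>
    rw [ih]
    rcases hbc with h | h
    · exact key_step L hL i _ _ h
    · exact (key_step L hL i _ _ h).symm
end

section
/- Every Lie derivation L of the incidence algebra I(X,R) of a finite preordered set X over a 2-torsion free commutative ring R with identity is proper: L = D + F where D is a derivation of I(X,R) and F is an R-linear map from I(X,R) into its center that vanishes on all commutators. -/
/-!
Evaluating the Lie identity on pairs of matrix units `e x y = matrixUnit x y` pins `L` down on
them. With `T = innerPart L` (`T u v = L (e v v) u v` for `u ≠ v`) and `σ = transitiveCoeff L`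
(`σ x y = L (e x y) x y` for `x ≠ y`) one finds `L (e x y) = [T, e x y] + σ x y • e x y` whenever
`x ≤ y`, `x ≠ y`, while `L (e x x) - [T, e x x]` is diagonal with entries constant along `≤`.
The coefficient `σ` is additive along chains `x ≤ y ≤ z`; for cycles `x ≤ y ≤ x` this, like the
vanishing of `L (e x y) u x` for `u ≠ x`, comes out as `2 r = 0` and needs 2-torsion-freeness.
So `D = [T, -] + σ ⊙ -` is a derivation and `F = L - D` sends every matrix unit, hence every
element, to a diagonal element constant along `≤`, which is central. Finally a central-valued
`F = L - D` kills commutators, because `F [f, g] = [F f, g] + [f, F g]`.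
-/

open Finset

namespace IncidenceAlgebra

variable {R X : Type*}

section Scalar
variable [Preorder X] [LocallyFiniteOrder X]

instance [Semiring R] : IsScalarTower R (IncidenceAlgebra R X) (IncidenceAlgebra R X) where
  smul_assoc c f g := by
    ext a b _
    simp only [smul_eq_mul, mul_apply, constSMul_apply, mul_sum, mul_assoc]

instance [CommSemiring R] : SMulCommClass R (IncidenceAlgebra R X) (IncidenceAlgebra R X) where
  smul_comm c f g := by
    ext a b _
    simp only [smul_eq_mul, mul_apply, constSMul_apply, mul_sum, mul_left_comm]

end Scalar

lemma coe_sum [AddCommMonoid R] [LE X] {ι : Type*} (s : Finset ι)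
    (f : ι → IncidenceAlgebra R X) :
    ⇑(∑ i ∈ s, f i) = ∑ i ∈ s, ⇑(f i) :=
  map_sum (⟨⟨(⇑), coe_zero⟩, coe_add⟩ : IncidenceAlgebra R X →+ X → X → R) f s

section MatrixUnit
variable [Semiring R] [Preorder X] [DecidableEq X] [DecidableLE X] {x y z w : X}

def matrixUnit (x y : X) : IncidenceAlgebra R X :=
  ⟨fun a b => if a = x ∧ b = y ∧ a ≤ b then 1 else 0,
    fun _ _ h => if_neg fun hc => h hc.2.2⟩

lemma matrixUnit_apply (hxy : x ≤ y) (a b : X) :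
    (matrixUnit x y : IncidenceAlgebra R X) a b = if a = x ∧ b = y then 1 else 0 := by
  simp only [matrixUnit, coe_mk]
  congr 1
  grind

lemma matrixUnit_of_not_le (hxy : ¬ x ≤ y) : (matrixUnit x y : IncidenceAlgebra R X) = 0 := by
  ext a b _
  simp only [matrixUnit, coe_mk, zero_apply]
  grind

lemma eq_sum_smul_matrixUnit [Fintype X] (f : IncidenceAlgebra R X) :
    f = ∑ x, ∑ y, f x y • matrixUnit x y := by
  ext a b hab
  simp [coe_sum, Finset.sum_apply, matrixUnit, hab, ite_and]

variable [LocallyFiniteOrder X]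

lemma mul_matrixUnit_apply (hxy : x ≤ y) (f : IncidenceAlgebra R X) (a b : X) :
    (f * matrixUnit x y : IncidenceAlgebra R X) a b = if b = y then f a x else 0 := by
  rw [mul_apply]
  split_ifs with hb
  · subst hb
    rw [sum_eq_single x]
    · simp [matrixUnit_apply hxy]
    · intro c _ hc
      simp [matrixUnit_apply hxy, hc]
    · intro hx
      rw [apply_eq_zero_of_not_le (fun hax => hx (mem_Icc.2 ⟨hax, hxy⟩)), zero_mul]
  · exact sum_eq_zero fun c _ => by simp [matrixUnit_apply hxy, hb]

lemma matrixUnit_mul_apply (hxy : x ≤ y) (f : IncidenceAlgebra R X) (a b : X) :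
    (matrixUnit x y * f : IncidenceAlgebra R X) a b = if a = x then f y b else 0 := by
  rw [mul_apply]
  split_ifs with ha
  · subst ha
    rw [sum_eq_single y]
    · simp [matrixUnit_apply hxy]
    · intro c _ hc
      simp [matrixUnit_apply hxy, hc]
    · intro hy
      rw [apply_eq_zero_of_not_le (fun hyb => hy (mem_Icc.2 ⟨hxy, hyb⟩)), mul_zero]
  · exact sum_eq_zero fun c _ => by simp [matrixUnit_apply hxy, ha]

lemma matrixUnit_mul_matrixUnit (hxy : x ≤ y) (hzw : z ≤ w) :
    (matrixUnit x y * matrixUnit z w : IncidenceAlgebra R X) =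
      if y = z then matrixUnit x w else 0 := by
  ext a b _
  rw [mul_matrixUnit_apply hzw, matrixUnit_apply hxy]
  by_cases hyz : y = z
  · subst hyz
    rw [if_pos rfl, matrixUnit_apply (hxy.trans hzw)]
    by_cases hb : b = w <;> simp [hb]
  · simp [hyz, Ne.symm hyz, zero_apply]

end MatrixUnit

section Center
variable (R X) [Preorder X]

def constDiagonal [Semiring R] : Submodule R (IncidenceAlgebra R X) where
  carrier := {h | (∀ u v, u ≠ v → h u v = 0) ∧ ∀ u v, u ≤ v → h u u = h v v}
  add_mem' ha hb :=
    ⟨fun u v huv => by simp [add_apply, ha.1 u v huv, hb.1 u v huv],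
      fun u v huv => by simp [add_apply, ha.2 u v huv, hb.2 u v huv]⟩
  zero_mem' := ⟨fun _ _ _ => rfl, fun _ _ _ => rfl⟩
  smul_mem' c h hh :=
    ⟨fun u v huv => by simp [constSMul_apply, hh.1 u v huv],
      fun u v huv => by simp [constSMul_apply, hh.2 u v huv]⟩

variable {R X} [CommSemiring R] [LocallyFiniteOrder X] [DecidableEq X]

lemma mem_center_of_mem_constDiagonal {h : IncidenceAlgebra R X} (hh : h ∈ constDiagonal R X) :
    h ∈ Set.center (IncidenceAlgebra R X) := by
  refine Semigroup.mem_center_iff.2 fun g => ?_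
  ext a b hab
  have hleft : ∑ c ∈ Icc a b, h a c * g c b = h a a * g a b :=
    sum_eq_single_of_mem a (mem_Icc.2 ⟨le_rfl, hab⟩) fun c _ hc => by
      rw [hh.1 a c hc.symm, zero_mul]
  have hright : ∑ c ∈ Icc a b, g a c * h c b = g a b * h b b :=
    sum_eq_single_of_mem b (mem_Icc.2 ⟨hab, le_rfl⟩) fun c _ hc => by rw [hh.1 c b hc, mul_zero]
  rw [mul_apply, mul_apply, hleft, hright, hh.2 a b hab, mul_comm]

end Center

section MulEntries
variable [CommSemiring R] [Preorder X]

def mulEntries (σ : X → X → R) : IncidenceAlgebra R X →ₗ[R] IncidenceAlgebra R X where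
  toFun f := ⟨fun a b => σ a b * f a b, fun a b h => by
    rw [apply_eq_zero_of_not_le h, mul_zero]⟩
  map_add' f g := by ext; simp [add_apply, mul_add]
  map_smul' c f := by ext; simp [constSMul_apply, mul_left_comm]

lemma mulEntries_apply (σ : X → X → R) (f : IncidenceAlgebra R X) (a b : X) :
    mulEntries σ f a b = σ a b * f a b := rfl

lemma mulEntries_matrixUnit [DecidableEq X] [DecidableLE X] (σ : X → X → R) (x y : X) :
    mulEntries σ (matrixUnit x y) = σ x y • matrixUnit x y := by
  ext a b _
  simp only [mulEntries_apply, constSMul_apply, matrixUnit, coe_mk, smul_eq_mul]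
  split_ifs with h
  · rw [h.1, h.2.1]
  · rw [mul_zero, mul_zero]

lemma mulEntries_mul [LocallyFiniteOrder X] {σ : X → X → R}
    (hσ : ∀ a b c, a ≤ b → b ≤ c → σ a c = σ a b + σ b c)
    (f g : IncidenceAlgebra R X) :
    mulEntries σ (f * g) = mulEntries σ f * g + f * mulEntries σ g := by
  ext a c _
  simp only [add_apply, mulEntries_apply, mul_apply, mul_sum, ← sum_add_distrib]
  refine sum_congr rfl fun b hb => ?_
  obtain ⟨hab, hbc⟩ := mem_Icc.1 hb
  rw [hσ a b c hab hbc]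
  ring

end MulEntries

end IncidenceAlgebra

theorem IsLieDerivation.sub_apply_commutator_eq_zero {R A : Type*} [Semiring R] [Ring A]
    [Module R A] {L D : A →ₗ[R] A} (hL : IsLieDerivation L)
    (hD : ∀ f g, D (f * g) = D f * g + f * D g) (hF : ∀ f, (L - D) f ∈ Set.center A)
    (f g : A) :
    (L - D) (f * g - g * f) = 0 := by
  have hcomm : ∀ f g, g * (L - D) f = (L - D) f * g := fun f g =>
    Semigroup.mem_center_iff.1 (hF f) g
  have hsplit : ∀ f, L f = D f + (L - D) f := fun f => by simp
  rw [LinearMap.sub_apply, hL, map_sub, hD, hD, hsplit f, hsplit g]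
  simp only [add_mul, mul_add, hcomm f g, hcomm g f]
  abel

namespace IncidenceAlgebra

variable {R X : Type*} [CommRing R] [Preorder X] [DecidableEq X] [DecidableLE X]

section Parts
variable (L : IncidenceAlgebra R X →ₗ[R] IncidenceAlgebra R X)

def innerPart : IncidenceAlgebra R X :=
  ⟨fun u v => if u = v then 0 else L (matrixUnit v v) u v, fun u v h => by
    split_ifs
    · rfl
    · exact apply_eq_zero_of_not_le h _⟩

variable {L}

lemma innerPart_apply_self (u : X) : innerPart L u u = 0 := if_pos rfl

lemma innerPart_apply_of_ne {u v : X} (huv : u ≠ v) :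
    innerPart L u v = L (matrixUnit v v) u v := if_neg huv

variable (L) in
def transitiveCoeff (a b : X) : R := if a = b then 0 else L (matrixUnit a b) a b

variable [LocallyFiniteOrder X]

variable (L) in
def derivationPart : IncidenceAlgebra R X →ₗ[R] IncidenceAlgebra R X :=
  LinearMap.mulLeft R (innerPart L) - LinearMap.mulRight R (innerPart L) +
    mulEntries (transitiveCoeff L)

lemma derivationPart_apply (f : IncidenceAlgebra R X) :
    derivationPart L f = innerPart L * f - f * innerPart L + mulEntries (transitiveCoeff L) f :=
  rfl

end Parts

end IncidenceAlgebra

namespace IsLieDerivation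

open IncidenceAlgebra

variable {R X : Type*} [CommRing R] [Preorder X] [LocallyFiniteOrder X] [DecidableEq X]
  [DecidableLE X] {L : IncidenceAlgebra R X →ₗ[R] IncidenceAlgebra R X} (hL : IsLieDerivation L)
  {x y z w u v : X}
include hL

lemma apply_commutator_matrixUnit_apply (hxy : x ≤ y) (hzw : z ≤ w) (u v : X) :
    L (matrixUnit x y * matrixUnit z w - matrixUnit z w * matrixUnit x y) u v =
      ((if v = w then L (matrixUnit x y) u z else 0) -
        (if u = z then L (matrixUnit x y) w v else 0)) +
      ((if u = x then L (matrixUnit z w) y v else 0) -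
        (if v = y then L (matrixUnit z w) u x else 0)) := by
  rw [hL]
  simp only [IncidenceAlgebra.add_apply, IncidenceAlgebra.sub_apply, mul_matrixUnit_apply,
    matrixUnit_mul_apply, hxy, hzw]

lemma matrixUnit_self_apply_add (hxy : x ≠ y) :
    L (matrixUnit x x) x y + L (matrixUnit y y) x y = 0 := by
  have h := hL.apply_commutator_matrixUnit_apply (le_refl x) (le_refl y) x y
  simp [matrixUnit_mul_matrixUnit, hxy, hxy.symm] at h
  exact h.symm

lemma matrixUnit_self_apply_eq_zero (hux : u ≠ x) (hvx : v ≠ x) (huv : u ≠ v) :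
    L (matrixUnit x x) u v = 0 := by
  have h := hL.apply_commutator_matrixUnit_apply (le_refl x) (le_refl u) u v
  simpa [matrixUnit_mul_matrixUnit, hux, hux.symm, hvx, huv.symm] using h

lemma matrixUnit_self_apply_self_eq (huv : u ≤ v) :
    L (matrixUnit x x) u u = L (matrixUnit x x) v v := by
  rcases eq_or_ne u v with rfl | huv'
  · rfl
  rcases eq_or_ne x u with rfl | hxu
  · have h := hL.apply_commutator_matrixUnit_apply (le_refl x) huv x v
    simp [matrixUnit_mul_matrixUnit, huv, huv'.symm] at h
    linear_combination h
  rcases eq_or_ne x v with rfl | hxv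
  · have h := hL.apply_commutator_matrixUnit_apply huv (le_refl x) u x
    simp [matrixUnit_mul_matrixUnit, huv, huv', hxu] at h
    linear_combination -h
  · have h := hL.apply_commutator_matrixUnit_apply (le_refl x) huv u v
    simp [matrixUnit_mul_matrixUnit, huv, hxu, hxu.symm, hxv.symm] at h
    linear_combination -h

section OffDiagonal
variable (hxy : x ≤ y) (hne : x ≠ y)
include hxy hne

lemma matrixUnit_apply_left (hux : u ≠ x) :
    L (matrixUnit x y) u y = L (matrixUnit x x) u x := by
  have h := hL.apply_commutator_matrixUnit_apply (le_refl x) hxy u y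
  simp [matrixUnit_mul_matrixUnit, hxy, hne.symm, hux] at h
  linear_combination h

lemma matrixUnit_apply_right (hvy : v ≠ y) :
    L (matrixUnit x y) x v = L (matrixUnit y y) y v := by
  have h := hL.apply_commutator_matrixUnit_apply hxy (le_refl y) x v
  simp [matrixUnit_mul_matrixUnit, hxy, hne, hne.symm, hvy] at h
  linear_combination h

lemma matrixUnit_apply_eq_zero (htf : ∀ r : R, r + r = 0 → r = 0)
    (hux : u ≠ x) (hvy : v ≠ y) : L (matrixUnit x y) u v = 0 := by
  have h := hL.apply_commutator_matrixUnit_apply (le_refl x) hxy u v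
  simp [matrixUnit_mul_matrixUnit, hxy, hne.symm, hux, hvy] at h
  rcases eq_or_ne v x with rfl | hvx
  -- here the identity reads `2 • L (matrixUnit x y) u x = 0`
  · simp at h
    exact htf _ (by linear_combination h)
  · simp [hvx] at h
    linear_combination h

lemma matrixUnit_eq_of_ne (htf : ∀ r : R, r + r = 0 → r = 0) :
    L (matrixUnit x y) = innerPart L * matrixUnit x y - matrixUnit x y * innerPart L +
      transitiveCoeff L x y • matrixUnit x y := by
  ext u v _
  simp only [IncidenceAlgebra.add_apply, IncidenceAlgebra.sub_apply, constSMul_apply,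
    mul_matrixUnit_apply hxy, matrixUnit_mul_apply hxy, matrixUnit_apply hxy, smul_eq_mul]
  by_cases hux : u = x <;> by_cases hvy : v = y
  · simp [hux, hvy, innerPart_apply_self, transitiveCoeff, hne]
  · simp [hux, hvy, innerPart_apply_of_ne (Ne.symm hvy), hL.matrixUnit_apply_right hxy hne hvy]
    linear_combination hL.matrixUnit_self_apply_add (Ne.symm hvy)
  · simp [hux, hvy, innerPart_apply_of_ne hux, hL.matrixUnit_apply_left hxy hne hux]
  · simp [hux, hvy, hL.matrixUnit_apply_eq_zero hxy hne htf hux hvy]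

end OffDiagonal

lemma transitiveCoeff_add (htf : ∀ r : R, r + r = 0 → r = 0) (hxy : x ≤ y) (hyz : y ≤ z) :
    transitiveCoeff L x z = transitiveCoeff L x y + transitiveCoeff L y z := by
  rcases eq_or_ne x y with rfl | hne₁
  · simp [transitiveCoeff]
  rcases eq_or_ne y z with rfl | hne₂
  · simp [transitiveCoeff]
  simp only [transitiveCoeff, if_neg hne₁, if_neg hne₂]
  rcases eq_or_ne x z with rfl | hne₃
  · have hxx := hL.apply_commutator_matrixUnit_apply hxy hyz x x
    have hyy := hL.apply_commutator_matrixUnit_apply hxy hyz y y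
    simp [matrixUnit_mul_matrixUnit, hxy, hyz, hne₁, hne₁.symm] at hxx hyy
    rw [if_pos rfl]
    refine (htf _ ?_).symm
    linear_combination -hxx + hyy + hL.matrixUnit_self_apply_self_eq (x := x) hxy -
      hL.matrixUnit_self_apply_self_eq (x := y) hxy
  · have h := hL.apply_commutator_matrixUnit_apply hxy hyz x z
    simp [matrixUnit_mul_matrixUnit, hxy, hyz, hne₁, hne₂.symm, hne₃.symm] at h
    rw [if_neg hne₃]
    linear_combination h

lemma matrixUnit_self_sub_mem (x : X) :
    L (matrixUnit x x) - (innerPart L * matrixUnit x x - matrixUnit x x * innerPart L) ∈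
      constDiagonal R X := by
  have hentry : ∀ u v, (L (matrixUnit x x) - (innerPart L * matrixUnit x x -
      matrixUnit x x * innerPart L) : IncidenceAlgebra R X) u v = L (matrixUnit x x) u v -
        ((if v = x then innerPart L u x else 0) - (if u = x then innerPart L x v else 0)) :=
    fun u v => by simp only [IncidenceAlgebra.sub_apply, mul_matrixUnit_apply (le_refl x),
      matrixUnit_mul_apply (le_refl x)]
  refine ⟨fun u v huv => ?_, fun u v huv => ?_⟩
  · rw [hentry]
    by_cases hvx : v = x
    · subst hvx
      simp [huv, innerPart_apply_of_ne huv]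
    by_cases hux : u = x
    · subst hux
      simp [hvx, innerPart_apply_of_ne huv, hL.matrixUnit_self_apply_add huv]
    · simp [hux, hvx, hL.matrixUnit_self_apply_eq_zero hux hvx huv]
  · have hdiag : ∀ w, (L (matrixUnit x x) - (innerPart L * matrixUnit x x -
        matrixUnit x x * innerPart L) : IncidenceAlgebra R X) w w = L (matrixUnit x x) w w := by
      intro w
      rw [hentry]
      split_ifs with hw <;> simp [hw, innerPart_apply_self]
    rw [hdiag, hdiag]
    exact hL.matrixUnit_self_apply_self_eq huv

lemma derivationPart_mul (htf : ∀ r : R, r + r = 0 → r = 0) (f g : IncidenceAlgebra R X) :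
    derivationPart L (f * g) = derivationPart L f * g + f * derivationPart L g := by
  simp only [derivationPart_apply, mulEntries_mul (fun a b c => hL.transitiveCoeff_add htf)]
  noncomm_ring

lemma sub_derivationPart_mem [Fintype X] (htf : ∀ r : R, r + r = 0 → r = 0)
    (f : IncidenceAlgebra R X) : (L - derivationPart L) f ∈ constDiagonal R X := by
  rw [eq_sum_smul_matrixUnit f, map_sum]
  refine Submodule.sum_mem _ fun x _ => ?_
  rw [map_sum]
  refine Submodule.sum_mem _ fun y _ => ?_
  rw [map_smul]
  refine Submodule.smul_mem _ _ ?_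
  rw [LinearMap.sub_apply, derivationPart_apply, mulEntries_matrixUnit]
  by_cases hxy : x ≤ y
  · rcases eq_or_ne x y with rfl | hne
    · simpa [transitiveCoeff] using hL.matrixUnit_self_sub_mem x
    · rw [hL.matrixUnit_eq_of_ne hxy hne htf, sub_self]
      exact Submodule.zero_mem _
  · simp [matrixUnit_of_not_le hxy]

end IsLieDerivation

/-- Every Lie derivation `L` of the incidence algebra `I(X,R)` of a finite preordered set `X`
over a 2-torsion free commutative ring `R` with identity is proper: `L = D + F` where `D` is
a derivation of `I(X,R)` and `F` is an `R`-linear map from `I(X,R)` into its center that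
vanishes on all commutators. -/
theorem lieDer_proper_finite {R X : Type*} [CommRing R] [Preorder X]
    [Fintype X] [DecidableEq X] [LocallyFiniteOrder X]
    (htf : ∀ r : R, r + r = 0 → r = 0)
    (L : IncidenceAlgebra R X →ₗ[R] IncidenceAlgebra R X)
    (hL : ∀ f g : IncidenceAlgebra R X,
      L (f * g - g * f) = (L f * g - g * L f) + (f * L g - L g * f)) :
    ∃ D F : IncidenceAlgebra R X →ₗ[R] IncidenceAlgebra R X,
      (∀ f g : IncidenceAlgebra R X, D (f * g) = D f * g + f * D g) ∧
      (∀ f : IncidenceAlgebra R X, F f ∈ Set.center (IncidenceAlgebra R X)) ∧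
      (∀ f g : IncidenceAlgebra R X, F (f * g - g * f) = 0) ∧
      L = D + F := by
  classical
  have hLie : IsLieDerivation L := hL
  have hD := hLie.derivationPart_mul htf
  set D := IncidenceAlgebra.derivationPart L
  have hF : ∀ f, (L - D) f ∈ Set.center (IncidenceAlgebra R X) := fun f =>
    IncidenceAlgebra.mem_center_of_mem_constDiagonal (hLie.sub_derivationPart_mem htf f)
  exact ⟨D, L - D, hD, hF, hLie.sub_apply_commutator_eq_zero hD hF, (add_sub_cancel D L).symm⟩
end
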